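/- Trilinear compensated compactness for three waves: let g^{αβ} be a constant symmetric matrix with associated operator □u = Σ g^{αβ}∂²_{αβ}u, and let φ_i^{(1)}, φ_i^{(2)}, φ_i^{(3)} be sequences of smooth compactly supported functions on ℝ^{d+1} with supports in a fixed compact set, such that ‖φ_i^{(j)}‖_{L³} → 0 while ‖∂φ_i^{(j)}‖_{L³} and ‖□φ_i^{(j)}‖_{L³} are uniformly bounded, for j = 1,2,3. Then ∫ (Σ g^{αβ} ∂_α φ_i^{(1)} ∂_β φ_i^{(2)}) · ∂_t φ_i^{(3)} dx → 0 as i → ∞. -/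

import Mathlib

open MeasureTheory Filter ENNReal

/-- The partial derivative in the `α`-th coordinate direction. -/
noncomputable def pd {n : ℕ} (α : Fin n) (f : (Fin n → ℝ) → ℝ) : (Fin n → ℝ) → ℝ :=
  fun x => fderiv ℝ f x (Pi.single α 1)

/-- The constant-coefficient wave operator `□u = Σ g^{αβ} ∂²_{αβ} u`. -/
noncomputable def Box {n : ℕ} (g : Matrix (Fin n) (Fin n) ℝ)
    (u : (Fin n → ℝ) → ℝ) : (Fin n → ℝ) → ℝ :=
  fun x => ∑ α, ∑ β, g α β * pd α (pd β u) x

section Helpers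
variable {n : ℕ}


lemma pd_contDiff {f : (Fin n → ℝ) → ℝ} (hf : ContDiff ℝ (⊤ : ℕ∞) f) (α : Fin n) :
    ContDiff ℝ (⊤ : ℕ∞) (pd α f) := by
  have h1 : ContDiff ℝ (⊤ : ℕ∞) (fderiv ℝ f) := hf.fderiv_right (by simp)
  exact (ContinuousLinearMap.apply ℝ ℝ (Pi.single α (1:ℝ))).contDiff.comp h1

lemma pd_tsupport_subset {f : (Fin n → ℝ) → ℝ} (α : Fin n) :
    tsupport (pd α f) ⊆ tsupport f := by
  apply closure_minimal _ isClosed_closure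
  intro x hx
  have : fderiv ℝ f x ≠ 0 := by
    intro h; exact hx (by simp [pd, h])
  exact support_fderiv_subset ℝ this

lemma pd_comm {f : (Fin n → ℝ) → ℝ} (hf : ContDiff ℝ (⊤ : ℕ∞) f) (α β : Fin n)
    (x : Fin n → ℝ) : pd α (pd β f) x = pd β (pd α f) x := by
  have hd : Differentiable ℝ (fderiv ℝ f) :=
    (hf.fderiv_right (m := (⊤ : ℕ∞)) ((by simp))).differentiable (by simp)
  have hsym : IsSymmSndFDerivAt ℝ f x :=
    (hf.contDiffAt).isSymmSndFDerivAt (by rw [minSmoothness_of_isRCLikeNormedField]; exact WithTop.coe_le_coe.mpr (le_top : (2:ℕ∞) ≤ ⊤))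
  have key : ∀ v w : Fin n → ℝ,
      fderiv ℝ (fun y => fderiv ℝ f y v) x w = fderiv ℝ (fderiv ℝ f) x w v := by
    intro v w
    rw [fderiv_clm_apply (hd x) (differentiableAt_const v)]
    simp
  show fderiv ℝ (fun y => fderiv ℝ f y (Pi.single β 1)) x (Pi.single α 1)
      = fderiv ℝ (fun y => fderiv ℝ f y (Pi.single α 1)) x (Pi.single β 1)
  rw [key, key]
  exact hsym _ _

lemma pd_mul {f g : (Fin n → ℝ) → ℝ} (hf : Differentiable ℝ f) (hg : Differentiable ℝ g)
    (α : Fin n) (x : Fin n → ℝ) :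
    pd α (fun y => f y * g y) x = pd α f x * g x + f x * pd α g x := by
  simp only [pd]
  rw [fderiv_fun_mul (hf x) (hg x)]
  simp
  ring

lemma pd_add {f g : (Fin n → ℝ) → ℝ} (hf : Differentiable ℝ f) (hg : Differentiable ℝ g)
    (α : Fin n) (x : Fin n → ℝ) :
    pd α (fun y => f y + g y) x = pd α f x + pd α g x := by
  simp only [pd]
  rw [fderiv_fun_add (hf x) (hg x)]
  simp

lemma integrable_mul {f g : (Fin n → ℝ) → ℝ} (hf : Continuous f) (hg : Continuous g)
    (h : HasCompactSupport f) : Integrable (fun x => f x * g x) volume :=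
  (hf.mul hg).integrable_of_hasCompactSupport (h.mul_right)

/-- Integration by parts. -/
lemma ibp {f g : (Fin n → ℝ) → ℝ} (hf : ContDiff ℝ (⊤ : ℕ∞) f) (hg : ContDiff ℝ (⊤ : ℕ∞) g)
    (hc : HasCompactSupport f) (α : Fin n) :
    ∫ x, pd α f x * g x = - ∫ x, f x * pd α g x := by
  have h1 : Integrable (fun x => pd α f x * g x) volume :=
    integrable_mul ((pd_contDiff hf α).continuous) hg.continuous
      (hc.mono' (subset_tsupport _ |>.trans (pd_tsupport_subset α)))
  have h2 : Integrable (fun x => f x * pd α g x) volume :=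
    integrable_mul hf.continuous ((pd_contDiff hg α).continuous) hc
  have h3 : Integrable (fun x => f x * g x) volume :=
    integrable_mul hf.continuous hg.continuous hc
  have := integral_mul_fderiv_eq_neg_fderiv_mul_of_integrable
    (μ := volume) (v := Pi.single α (1:ℝ)) (f := f) (g := g) h1 h2 h3
    (fun x _ => hf.differentiable (by simp) x) (fun x _ => hg.differentiable (by simp) x)
  simp only [pd] at *
  rw [this, neg_neg]

lemma Box_continuous {g : Matrix (Fin n) (Fin n) ℝ} {u : (Fin n → ℝ) → ℝ}
    (hu : ContDiff ℝ (⊤ : ℕ∞) u) : Continuous (Box g u) := by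
  apply continuous_finset_sum _ fun α _ => ?_
  exact continuous_finset_sum _ fun β _ => continuous_const.mul
    ((pd_contDiff (pd_contDiff hu β) α).continuous)

lemma Box_tsupport_subset {g : Matrix (Fin n) (Fin n) ℝ} {u : (Fin n → ℝ) → ℝ} :
    tsupport (Box g u) ⊆ tsupport u := by
  apply closure_minimal _ isClosed_closure
  intro x hx
  by_contra hxu
  apply hx
  simp only [Box]
  apply Finset.sum_eq_zero fun α _ => Finset.sum_eq_zero fun β _ => ?_
  have h1 : x ∉ tsupport (pd β u) := fun h => hxu (pd_tsupport_subset β h)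
  have h2 : x ∉ tsupport (pd α (pd β u)) := fun h => h1 (pd_tsupport_subset α h)
  have : pd α (pd β u) x = 0 := image_eq_zero_of_notMem_tsupport h2
  rw [this, mul_zero]

/-- The quadruple-integration-by-parts core step. -/
lemma box_ibp {g : Matrix (Fin n) (Fin n) ℝ} {F w : (Fin n → ℝ) → ℝ} (t0 : Fin n)
    (hF : ContDiff ℝ (⊤ : ℕ∞) F) (hw : ContDiff ℝ (⊤ : ℕ∞) w) (hcF : HasCompactSupport F) :
    ∫ x, Box g F x * pd t0 w x = - ∫ x, pd t0 F x * Box g w x := by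
  have hpdF : ∀ γ : Fin n, ContDiff ℝ (⊤ : ℕ∞) (pd γ F) := fun γ => pd_contDiff hF γ
  have hcpd : ∀ γ : Fin n, HasCompactSupport (pd γ F) := fun γ =>
    hcF.mono' (subset_tsupport _ |>.trans (pd_tsupport_subset γ))
  have key : ∀ α β : Fin n,
      ∫ x, pd α (pd β F) x * pd t0 w x = - ∫ x, pd t0 F x * pd α (pd β w) x := by
    intro α β
    have e1 : ∫ x, pd α (pd β F) x * pd t0 w x = - ∫ x, pd β F x * pd α (pd t0 w) x :=
      ibp (hpdF β) (pd_contDiff hw t0) (hcpd β) α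
    have e2 : ∫ x, pd β F x * pd α (pd t0 w) x = - ∫ x, F x * pd β (pd α (pd t0 w)) x :=
      ibp hF (pd_contDiff (pd_contDiff hw t0) α) hcF β
    have e3 : ∀ x, pd β (pd α (pd t0 w)) x = pd t0 (pd β (pd α w)) x := by
      intro x
      have h1 : pd α (pd t0 w) = pd t0 (pd α w) := funext fun y => pd_comm hw α t0 y
      rw [h1]
      exact pd_comm (pd_contDiff hw α) β t0 x
    have e4 : ∫ x, F x * pd β (pd α (pd t0 w)) x = ∫ x, F x * pd t0 (pd β (pd α w)) x := by
      congr 1; funext x; rw [e3 x]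
    have e5 : ∫ x, pd t0 F x * pd β (pd α w) x = - ∫ x, F x * pd t0 (pd β (pd α w)) x :=
      ibp hF (pd_contDiff (pd_contDiff hw α) β) hcF t0
    have e6 : ∀ x, pd β (pd α w) x = pd α (pd β w) x := fun x => pd_comm hw β α x
    have e7 : ∫ x, pd t0 F x * pd β (pd α w) x = ∫ x, pd t0 F x * pd α (pd β w) x := by
      congr 1; funext x; rw [e6 x]
    rw [e1, e2, neg_neg, e4, ← e7, e5, neg_neg]
  have int1 : ∀ α β : Fin n, Integrable (fun x => pd α (pd β F) x * pd t0 w x) volume := by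
    intro α β
    exact integrable_mul (pd_contDiff (hpdF β) α).continuous (pd_contDiff hw t0).continuous
      ((hcpd β).mono' (subset_tsupport _ |>.trans (pd_tsupport_subset α)))
  have int2 : ∀ α β : Fin n, Integrable (fun x => pd t0 F x * pd α (pd β w) x) volume := by
    intro α β
    exact integrable_mul (hpdF t0).continuous (pd_contDiff (pd_contDiff hw β) α).continuous
      (hcpd t0)
  calc ∫ x, Box g F x * pd t0 w x
      = ∫ x, ∑ α, ∑ β, g α β * (pd α (pd β F) x * pd t0 w x) := by
        congr 1; funext x; simp only [Box, Finset.sum_mul, mul_assoc]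
    _ = ∑ α, ∑ β, g α β * ∫ x, pd α (pd β F) x * pd t0 w x := by
        rw [integral_finset_sum]
        · exact Finset.sum_congr rfl fun α _ => by
            rw [integral_finset_sum _ fun β _ => ((int1 α β).const_mul _)]
            exact Finset.sum_congr rfl fun β _ => integral_const_mul _ _
        · intro α _
          exact integrable_finset_sum _ fun β _ => (int1 α β).const_mul _
    _ = ∑ α, ∑ β, g α β * - ∫ x, pd t0 F x * pd α (pd β w) x := by
        exact Finset.sum_congr rfl fun α _ => Finset.sum_congr rfl fun β _ => by rw [key α β]
    _ = - ∫ x, pd t0 F x * Box g w x := by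
        rw [show (fun x => pd t0 F x * Box g w x)
            = fun x => ∑ α, ∑ β, g α β * (pd t0 F x * pd α (pd β w) x) by
          funext x; simp only [Box, Finset.mul_sum]
          exact Finset.sum_congr rfl fun α _ => Finset.sum_congr rfl fun β _ => by ring]
        rw [integral_finset_sum _ fun α _ =>
          integrable_finset_sum _ fun β _ => (int2 α β).const_mul (g α β)]
        rw [← Finset.sum_neg_distrib]
        refine Finset.sum_congr rfl fun α _ => ?_
        rw [integral_finset_sum _ fun β _ => (int2 α β).const_mul (g α β), ← Finset.sum_neg_distrib]
        exact Finset.sum_congr rfl fun β _ => by rw [integral_const_mul, mul_neg]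

lemma box_mul {g : Matrix (Fin n) (Fin n) ℝ} (hg : g.IsSymm) {u v : (Fin n → ℝ) → ℝ}
    (hu : ContDiff ℝ (⊤ : ℕ∞) u) (hv : ContDiff ℝ (⊤ : ℕ∞) v) (x : Fin n → ℝ) :
    Box g (fun y => u y * v y) x = Box g u x * v x + u x * Box g v x
      + 2 * ∑ α, ∑ β, g α β * (pd α u x * pd β v x) := by
  have hdu := hu.differentiable (by simp)
  have hdv := hv.differentiable (by simp)
  have h2 : ∀ α β : Fin n, ∀ x, pd α (pd β (fun y => u y * v y)) x
      = pd α (pd β u) x * v x + pd β u x * pd α v x + pd α u x * pd β v x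
        + u x * pd α (pd β v) x := by
    intro α β x
    have e : pd β (fun y => u y * v y) = fun y => (pd β u y * v y) + (u y * pd β v y) :=
      funext (pd_mul hdu hdv β)
    rw [e]
    have c1 : ContDiff ℝ (⊤ : ℕ∞) fun y => pd β u y * v y := (pd_contDiff hu β).mul hv
    have c2 : ContDiff ℝ (⊤ : ℕ∞) fun y => u y * pd β v y := hu.mul (pd_contDiff hv β)
    rw [pd_add (c1.differentiable (by simp)) (c2.differentiable (by simp))]
    rw [pd_mul ((pd_contDiff hu β).differentiable (by simp)) hdv,
        pd_mul hdu ((pd_contDiff hv β).differentiable (by simp))]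
    ring
  have cross : (∑ α, ∑ β, g α β * (pd β u x * pd α v x))
      = ∑ α, ∑ β, g α β * (pd α u x * pd β v x) := by
    rw [Finset.sum_comm]
    exact Finset.sum_congr rfl fun α _ => Finset.sum_congr rfl fun β _ => by
      rw [hg.apply α β]
  simp only [Box]
  calc (∑ α, ∑ β, g α β * pd α (pd β fun y => u y * v y) x)
      = ∑ α, ∑ β, (g α β * pd α (pd β u) x * v x + u x * (g α β * pd α (pd β v) x)
          + (g α β * (pd β u x * pd α v x) + g α β * (pd α u x * pd β v x))) := by
        refine Finset.sum_congr rfl fun α _ => Finset.sum_congr rfl fun β _ => ?_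
        rw [h2 α β x]; ring
    _ = (∑ α, ∑ β, g α β * pd α (pd β u) x * v x)
        + (∑ α, ∑ β, u x * (g α β * pd α (pd β v) x))
        + ((∑ α, ∑ β, g α β * (pd β u x * pd α v x))
          + ∑ α, ∑ β, g α β * (pd α u x * pd β v x)) := by
        simp only [Finset.sum_add_distrib]
    _ = (∑ α, ∑ β, g α β * pd α (pd β u) x) * v x
        + u x * (∑ α, ∑ β, g α β * pd α (pd β v) x)
        + 2 * ∑ α, ∑ β, g α β * (pd α u x * pd β v x) := by
        rw [cross, Finset.sum_mul, Finset.mul_sum]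
        congr 1
        · congr 1
          · exact Finset.sum_congr rfl fun α _ => by rw [Finset.sum_mul]
          · exact Finset.sum_congr rfl fun α _ => by rw [Finset.mul_sum]
        · ring

lemma key_identity {g : Matrix (Fin n) (Fin n) ℝ} (hg : g.IsSymm) (t0 : Fin n)
    {u v w : (Fin n → ℝ) → ℝ} (hu : ContDiff ℝ (⊤ : ℕ∞) u) (hv : ContDiff ℝ (⊤ : ℕ∞) v)
    (hw : ContDiff ℝ (⊤ : ℕ∞) w) (hcu : HasCompactSupport u) (hcv : HasCompactSupport v)
    (hcw : HasCompactSupport w) :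
    ∫ x, (∑ α, ∑ β, g α β * pd α u x * pd β v x) * pd t0 w x
    = -(1/2) * ((∫ x, pd t0 u x * v x * Box g w x) + (∫ x, u x * pd t0 v x * Box g w x)
      + (∫ x, Box g u x * v x * pd t0 w x) + (∫ x, u x * Box g v x * pd t0 w x)) := by
  have huv : ContDiff ℝ (⊤ : ℕ∞) fun y => u y * v y := hu.mul hv
  have hcuv : HasCompactSupport fun y => u y * v y := hcu.mul_right
  -- integrability of all pieces
  have iA : Integrable (fun x => Box g (fun y => u y * v y) x * pd t0 w x) volume :=
    integrable_mul (Box_continuous huv) (pd_contDiff hw t0).continuous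
      (hcuv.mono' (subset_tsupport _ |>.trans Box_tsupport_subset))
  have iT3 : Integrable (fun x => Box g u x * v x * pd t0 w x) volume := by
    have : Integrable (fun x => Box g u x * (v x * pd t0 w x)) volume :=
      integrable_mul (Box_continuous hu) (hv.continuous.mul (pd_contDiff hw t0).continuous)
        (hcu.mono' (subset_tsupport _ |>.trans Box_tsupport_subset))
    simpa [mul_assoc] using this
  have iT4 : Integrable (fun x => u x * Box g v x * pd t0 w x) volume := by
    have : Integrable (fun x => u x * (Box g v x * pd t0 w x)) volume :=
      integrable_mul hu.continuous ((Box_continuous hv).mul (pd_contDiff hw t0).continuous) hcu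
    simpa [mul_assoc] using this
  have iT1 : Integrable (fun x => pd t0 u x * v x * Box g w x) volume := by
    have : Integrable (fun x => pd t0 u x * (v x * Box g w x)) volume :=
      integrable_mul (pd_contDiff hu t0).continuous (hv.continuous.mul (Box_continuous hw))
        (hcu.mono' (subset_tsupport _ |>.trans (pd_tsupport_subset t0)))
    simpa [mul_assoc] using this
  have iT2 : Integrable (fun x => u x * pd t0 v x * Box g w x) volume := by
    have : Integrable (fun x => u x * (pd t0 v x * Box g w x)) volume :=
      integrable_mul hu.continuous ((pd_contDiff hv t0).continuous.mul (Box_continuous hw)) hcu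
    simpa [mul_assoc] using this
  -- step 1: pointwise identity
  have step1 : ∫ x, (∑ α, ∑ β, g α β * pd α u x * pd β v x) * pd t0 w x
      = ∫ x, ((1:ℝ)/2) * (Box g (fun y => u y * v y) x * pd t0 w x)
          - ((1/2) * (Box g u x * v x * pd t0 w x) + (1/2) * (u x * Box g v x * pd t0 w x)) := by
    congr 1; funext x
    have e := box_mul hg hu hv x
    have : (∑ α, ∑ β, g α β * pd α u x * pd β v x)
        = ∑ α, ∑ β, g α β * (pd α u x * pd β v x) := by
      exact Finset.sum_congr rfl fun α _ => Finset.sum_congr rfl fun β _ => by ring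
    rw [this]
    have e2 : (∑ α, ∑ β, g α β * (pd α u x * pd β v x))
        = (1/2) * (Box g (fun y => u y * v y) x - Box g u x * v x - u x * Box g v x) := by
      rw [e]; ring
    rw [e2]; ring
  -- step 2: split the integral
  have step2 : ∫ x, ((1:ℝ)/2) * (Box g (fun y => u y * v y) x * pd t0 w x)
          - ((1/2) * (Box g u x * v x * pd t0 w x) + (1/2) * (u x * Box g v x * pd t0 w x))
      = (1/2) * (∫ x, Box g (fun y => u y * v y) x * pd t0 w x)
        - ((1/2) * (∫ x, Box g u x * v x * pd t0 w x)
          + (1/2) * (∫ x, u x * Box g v x * pd t0 w x)) := by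
    have iB : Integrable (fun x => (1/2 : ℝ) * (Box g u x * v x * pd t0 w x)
        + (1/2 : ℝ) * (u x * Box g v x * pd t0 w x)) volume :=
      (iT3.const_mul _).add (iT4.const_mul _)
    rw [integral_sub (iA.const_mul _) iB,
        integral_add (iT3.const_mul _) (iT4.const_mul _),
        integral_const_mul, integral_const_mul, integral_const_mul]
  -- step 3: the Box-IBP
  have step3 : ∫ x, Box g (fun y => u y * v y) x * pd t0 w x
      = - ((∫ x, pd t0 u x * v x * Box g w x) + ∫ x, u x * pd t0 v x * Box g w x) := by
    rw [box_ibp t0 huv hw hcuv]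
    congr 1
    have e : ∀ x, pd t0 (fun y => u y * v y) x * Box g w x
        = pd t0 u x * v x * Box g w x + u x * pd t0 v x * Box g w x := by
      intro x
      rw [pd_mul (hu.differentiable (by simp)) (hv.differentiable (by simp))]
      ring
    calc ∫ x, pd t0 (fun y => u y * v y) x * Box g w x
        = ∫ x, (pd t0 u x * v x * Box g w x + u x * pd t0 v x * Box g w x) := by
          congr 1; funext x; exact e x
      _ = _ := integral_add iT1 iT2
  rw [step1, step2, step3]
  ring


lemma h32 : (1:ℝ≥0∞)/(3/2) = 2/3 := by
  rw [one_div, ENNReal.inv_div (by norm_num) (by norm_num)]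

lemma hexp1 : (1:ℝ≥0∞)/1 = 1/(3/2) + 1/3 := by
  rw [h32, ENNReal.div_add_div_same]
  norm_num
  rw [ENNReal.div_self (by norm_num) (by norm_num)]

lemma hexp2 : (1:ℝ≥0∞)/(3/2) = 1/3 + 1/3 := by
  rw [h32, ENNReal.div_add_div_same]
  norm_num



lemma elp3_ne_top {u : (Fin n → ℝ) → ℝ} (hu : Continuous u) (hcu : HasCompactSupport u) :
    eLpNorm u 3 volume ≠ ⊤ :=
  (hu.memLp_of_hasCompactSupport (μ := volume) hcu (p := 3)).eLpNorm_ne_top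

lemma holder3 {f g h : (Fin n → ℝ) → ℝ} (hf : Continuous f) (hg : Continuous g)
    (hh : Continuous h) (hcf : HasCompactSupport f) (hcg : HasCompactSupport g)
    (hch : HasCompactSupport h) :
    |∫ x, f x * g x * h x| ≤ (eLpNorm f 3 volume).toReal * (eLpNorm g 3 volume).toReal
      * (eLpNorm h 3 volume).toReal := by
  have hFi : Integrable (fun x => f x * g x * h x) volume :=
    ((hf.mul hg).mul hh).integrable_of_hasCompactSupport (hcf.mul_right.mul_right)
  have hol1 : eLpNorm (fun x => (f x * g x) * h x) 1 volume
      ≤ eLpNorm (fun x => f x * g x) (3/2) volume * eLpNorm h 3 volume := by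
    have := eLpNorm_le_eLpNorm_mul_eLpNorm'_of_norm (μ := volume) (hf.mul hg).aestronglyMeasurable
      hh.aestronglyMeasurable (· * ·) 1
      (Filter.Eventually.of_forall fun x => by simp [norm_mul])
      (hpqr := ⟨by simp only [← one_div]; exact hexp1.symm⟩)
    simp only [ENNReal.coe_one, one_mul] at this; exact this
  have hol2 : eLpNorm (fun x => f x * g x) (3/2) volume
      ≤ eLpNorm f 3 volume * eLpNorm g 3 volume := by
    have := eLpNorm_le_eLpNorm_mul_eLpNorm'_of_norm (μ := volume) hf.aestronglyMeasurable
      hg.aestronglyMeasurable (· * ·) 1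
      (Filter.Eventually.of_forall fun x => by simp [norm_mul])
      (hpqr := ⟨by simp only [← one_div]; exact hexp2.symm⟩)
    simpa using this
  have hne : eLpNorm f 3 volume * eLpNorm g 3 volume * eLpNorm h 3 volume ≠ ⊤ :=
    ENNReal.mul_ne_top (ENNReal.mul_ne_top (elp3_ne_top hf hcf) (elp3_ne_top hg hcg))
      (elp3_ne_top hh hch)
  calc |∫ x, f x * g x * h x| ≤ ∫ x, ‖f x * g x * h x‖ := by
        rw [← Real.norm_eq_abs]
        exact norm_integral_le_integral_norm _
    _ = (eLpNorm (fun x => f x * g x * h x) 1 volume).toReal := by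
        rw [eLpNorm_one_eq_lintegral_enorm,
          integral_norm_eq_lintegral_enorm hFi.aestronglyMeasurable]
    _ ≤ (eLpNorm f 3 volume * eLpNorm g 3 volume * eLpNorm h 3 volume).toReal :=
        ENNReal.toReal_mono hne (hol1.trans (mul_le_mul_left hol2 _))
    _ = _ := by rw [ENNReal.toReal_mul, ENNReal.toReal_mul]

end Helpers

/-- Trilinear compensated compactness for three waves: if `‖φ_i^{(j)}‖_{L³} → 0` while
`‖∂φ_i^{(j)}‖_{L³}` and `‖□φ_i^{(j)}‖_{L³}` are uniformly bounded (supports in a fixed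
compact set), then `∫ Q_0(φ_i^{(1)}, φ_i^{(2)}) ∂_t φ_i^{(3)} → 0`. -/
theorem stmt8 {d : ℕ} (g : Matrix (Fin (d + 1)) (Fin (d + 1)) ℝ) (hg : g.IsSymm)
    (t0 : Fin (d + 1)) (K : Set (Fin (d + 1) → ℝ)) (hK : IsCompact K) (C : ℝ)
    (φ : ℕ → Fin 3 → (Fin (d + 1) → ℝ) → ℝ)
    (hsm : ∀ i j, ContDiff ℝ (⊤ : ℕ∞) (φ i j))
    (hsupp : ∀ i j, tsupport (φ i j) ⊆ K)
    (hL3 : ∀ j, Tendsto (fun i => eLpNorm (φ i j) 3 volume) atTop (nhds 0))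
    (hdL3 : ∀ i j (α : Fin (d + 1)),
      eLpNorm (pd α (φ i j)) 3 volume ≤ ENNReal.ofReal C)
    (hbox : ∀ i j, eLpNorm (Box g (φ i j)) 3 volume ≤ ENNReal.ofReal C) :
    Tendsto
      (fun i => ∫ x,
        (∑ α, ∑ β, g α β * pd α (φ i 0) x * pd β (φ i 1) x) * pd t0 (φ i 2) x)
      atTop (nhds 0) := by
  have hcs : ∀ i j, HasCompactSupport (φ i j) := fun i j =>
    hK.of_isClosed_subset isClosed_closure (hsupp i j)
  set M := (ENNReal.ofReal C).toReal with hM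
  have hM0 : 0 ≤ M := ENNReal.toReal_nonneg
  set A : Fin 3 → ℕ → ℝ := fun j i => (eLpNorm (φ i j) 3 volume).toReal with hA
  have hA0 : ∀ j i, 0 ≤ A j i := fun j i => ENNReal.toReal_nonneg
  have Atend : ∀ j, Tendsto (A j) atTop (nhds 0) := by
    intro j
    have h2 := (ENNReal.tendsto_toReal (by simp : (0:ℝ≥0∞) ≠ ⊤)).comp (hL3 j)
    simpa [hA, Function.comp_def] using h2
  have pdbd : ∀ i j (α : Fin (d+1)), (eLpNorm (pd α (φ i j)) 3 volume).toReal ≤ M :=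
    fun i j α => ENNReal.toReal_mono ENNReal.ofReal_ne_top (hdL3 i j α)
  have boxbd : ∀ i j, (eLpNorm (Box g (φ i j)) 3 volume).toReal ≤ M := fun i j =>
    ENNReal.toReal_mono ENNReal.ofReal_ne_top (hbox i j)
  have contφ : ∀ i j, Continuous (φ i j) := fun i j => (hsm i j).continuous
  have contpd : ∀ i j (α : Fin (d+1)), Continuous (pd α (φ i j)) := fun i j α =>
    (pd_contDiff (hsm i j) α).continuous
  have contbox : ∀ i j, Continuous (Box g (φ i j)) := fun i j => Box_continuous (hsm i j)
  have cspd : ∀ i j (α : Fin (d+1)), HasCompactSupport (pd α (φ i j)) := fun i j α =>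
    (hcs i j).mono' (subset_tsupport _ |>.trans (pd_tsupport_subset α))
  have csbox : ∀ i j, HasCompactSupport (Box g (φ i j)) := fun i j =>
    (hcs i j).mono' (subset_tsupport _ |>.trans Box_tsupport_subset)
  apply squeeze_zero_norm (a := fun i => (M * M) * (A 0 i + A 1 i))
  · intro i
    rw [Real.norm_eq_abs,
      key_identity hg t0 (hsm i 0) (hsm i 1) (hsm i 2) (hcs i 0) (hcs i 1) (hcs i 2)]
    have b1 : |∫ x, pd t0 (φ i 0) x * φ i 1 x * Box g (φ i 2) x| ≤ M * A 1 i * M :=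
      (holder3 (contpd i 0 t0) (contφ i 1) (contbox i 2) (cspd i 0 t0) (hcs i 1)
        (csbox i 2)).trans
        (mul_le_mul (mul_le_mul (pdbd i 0 t0) le_rfl (hA0 1 i) hM0) (boxbd i 2)
          ENNReal.toReal_nonneg (mul_nonneg hM0 (hA0 1 i)))
    have b2 : |∫ x, φ i 0 x * pd t0 (φ i 1) x * Box g (φ i 2) x| ≤ A 0 i * M * M :=
      (holder3 (contφ i 0) (contpd i 1 t0) (contbox i 2) (hcs i 0) (cspd i 1 t0)
        (csbox i 2)).trans
        (mul_le_mul (mul_le_mul le_rfl (pdbd i 1 t0) ENNReal.toReal_nonneg (hA0 0 i))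
          (boxbd i 2) ENNReal.toReal_nonneg (mul_nonneg (hA0 0 i) hM0))
    have b3 : |∫ x, Box g (φ i 0) x * φ i 1 x * pd t0 (φ i 2) x| ≤ M * A 1 i * M :=
      (holder3 (contbox i 0) (contφ i 1) (contpd i 2 t0) (csbox i 0) (hcs i 1)
        (cspd i 2 t0)).trans
        (mul_le_mul (mul_le_mul (boxbd i 0) le_rfl (hA0 1 i) hM0) (pdbd i 2 t0)
          ENNReal.toReal_nonneg (mul_nonneg hM0 (hA0 1 i)))
    have b4 : |∫ x, φ i 0 x * Box g (φ i 1) x * pd t0 (φ i 2) x| ≤ A 0 i * M * M :=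
      (holder3 (contφ i 0) (contbox i 1) (contpd i 2 t0) (hcs i 0) (csbox i 1)
        (cspd i 2 t0)).trans
        (mul_le_mul (mul_le_mul le_rfl (boxbd i 1) ENNReal.toReal_nonneg (hA0 0 i))
          (pdbd i 2 t0) ENNReal.toReal_nonneg (mul_nonneg (hA0 0 i) hM0))
    rw [abs_mul]
    have h12 : |(-(1/2) : ℝ)| = 1/2 := by norm_num
    rw [h12]
    have habs : |(∫ x, pd t0 (φ i 0) x * φ i 1 x * Box g (φ i 2) x)
        + (∫ x, φ i 0 x * pd t0 (φ i 1) x * Box g (φ i 2) x)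
        + (∫ x, Box g (φ i 0) x * φ i 1 x * pd t0 (φ i 2) x)
        + (∫ x, φ i 0 x * Box g (φ i 1) x * pd t0 (φ i 2) x)|
        ≤ |∫ x, pd t0 (φ i 0) x * φ i 1 x * Box g (φ i 2) x|
        + |∫ x, φ i 0 x * pd t0 (φ i 1) x * Box g (φ i 2) x|
        + |∫ x, Box g (φ i 0) x * φ i 1 x * pd t0 (φ i 2) x|
        + |∫ x, φ i 0 x * Box g (φ i 1) x * pd t0 (φ i 2) x| :=
      (abs_add_le _ _).trans (add_le_add (abs_add_three _ _ _) le_rfl)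
    linarith [habs, b1, b2, b3, b4]
  · have h2 : Tendsto (fun i => (M*M) * (A 0 i + A 1 i)) atTop (nhds ((M*M)*(0+0))) :=
      ((Atend 0).add (Atend 1)).const_mul (M*M)
    simpa using h2
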